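/- arXiv:2310.17806 — 4 statements merged into one kernel-verified Lean document; each statement's English description precedes it below -/
import Mathlib

section
/- (Naïve transport formula.) Suppose μ(A=1, S=0) > 0; that every w with μ(W=w, A=1, S=0) > 0 also satisfies μ(W=w, A=1, S=1) > 0 and μ(W=w, A=0, S=1) > 0 (positivity of selection and of treatment assignment); that consistency and parallel trends hold; and that mean exchangeability of selection among the treated holds: E[Y₁(1) − Y₁(0) | W=w, A=1, S=0] = E[Y₁(1) − Y₁(0) | W=w, A=1, S=1] for every w with μ(W=w, A=1, S=0) > 0. Then the population average treatment effect in the treated is identified: E[Y₁(1) − Y₁(0) | A=1, S=0] = Σ_w (m₁(w) − m₀(w)) · μ({W=w} | {A=1, S=0}). -/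
open MeasureTheory ProbabilityTheory
open scoped Classical

noncomputable section

/-- Conditional expectation of `X` given the event `E`. -/
def cexp {Ω : Type*} [MeasurableSpace Ω] (μ : Measure Ω) (X : Ω → ℝ) (E : Set Ω) : ℝ :=
  ∫ ω, X ω ∂(μ[|E])

/-- The event `{W = w, A = a, S = s}`. -/
def evtWAS {Ω 𝒲 : Type*} (W : Ω → 𝒲) (A S : Ω → Bool) (w : 𝒲) (a s : Bool) : Set Ω :=
  {ω | W ω = w ∧ A ω = a ∧ S ω = s}

/-- The event `{A = a, S = s}`. -/
def evtAS {Ω : Type*} (A S : Ω → Bool) (a s : Bool) : Set Ω :=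
  {ω | A ω = a ∧ S ω = s}

/-- The outcome-difference regression `m_a(w) = E[Y₁ - Y₀ | W = w, A = a, S = 1]`. -/
def mfun {Ω 𝒲 : Type*} [MeasurableSpace Ω] (μ : Measure Ω) (W : Ω → 𝒲) (A S : Ω → Bool)
    (Y₀ Y₁ : Ω → ℝ) (a : Bool) (w : 𝒲) : ℝ :=
  cexp μ (fun ω => Y₁ ω - Y₀ ω) (evtWAS W A S w a true)

section Aux

variable {Ω : Type*} [MeasurableSpace Ω] (μ : Measure Ω)

lemma integrable_cond_aux {f : Ω → ℝ} (hf : Integrable f μ) (s : Set Ω) :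
    Integrable f (μ[|s]) := by
  rw [ProbabilityTheory.cond]
  by_cases h : μ s = 0
  · rw [Measure.restrict_eq_zero.mpr h, smul_zero]
    exact integrable_zero_measure
  · exact (hf.restrict).smul_measure (ENNReal.inv_ne_top.mpr h)

lemma cexp_sub_aux {f g : Ω → ℝ} (hf : Integrable f μ) (hg : Integrable g μ) (s : Set Ω) :
    cexp μ (fun ω => f ω - g ω) s = cexp μ f s - cexp μ g s :=
  integral_sub (integrable_cond_aux μ hf s) (integrable_cond_aux μ hg s)

lemma cexp_congr_aux {f g : Ω → ℝ} {s : Set Ω} (hs : MeasurableSet s)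
    (h : ∀ ω ∈ s, f ω = g ω) : cexp μ f s = cexp μ g s := by
  unfold cexp
  refine integral_congr_ae ?_
  rw [ProbabilityTheory.cond]
  exact Measure.ae_smul_measure ((ae_restrict_mem hs).mono fun ω hω => h ω hω) _

lemma setIntegral_eq_cexp_aux (f : Ω → ℝ) (s : Set Ω) (hμs : μ s ≠ ⊤) :
    ∫ ω in s, f ω ∂μ = (μ s).toReal * cexp μ f s := by
  unfold cexp
  rw [ProbabilityTheory.cond, integral_smul_measure]
  by_cases h : μ s = 0
  · rw [Measure.restrict_eq_zero.mpr h, integral_zero_measure, h]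
    simp
  · rw [ENNReal.toReal_inv, smul_eq_mul, ← mul_assoc,
      mul_inv_cancel₀ (ENNReal.toReal_ne_zero.mpr ⟨h, hμs⟩), one_mul]

end Aux

/-- the naïve transport formula identifies the PATT under positivity of
selection and of treatment assignment, consistency, parallel trends, and mean
exchangeability of selection among the treated. -/
theorem naive_transport_identifies_PATT
    {Ω : Type*} [MeasurableSpace Ω] (μ : Measure Ω) [IsProbabilityMeasure μ]
    {𝒲 : Type*} [Fintype 𝒲] [MeasurableSpace 𝒲] [MeasurableSingletonClass 𝒲]
    (S A : Ω → Bool) (W : Ω → 𝒲) (Y₀ Y₁ Ypot0 Ypot1 : Ω → ℝ)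
    (hS : Measurable S) (hA : Measurable A) (hW : Measurable W)
    (hY₀ : Integrable Y₀ μ) (hY₁ : Integrable Y₁ μ)
    (hPot0 : Integrable Ypot0 μ) (hPot1 : Integrable Ypot1 μ)
    -- consistency
    (hcons0 : ∀ ω, A ω = false → Ypot0 ω = Y₁ ω)
    (hcons1 : ∀ ω, A ω = true → Ypot1 ω = Y₁ ω)
    -- parallel trends
    (hPT : ∀ w : 𝒲, 0 < μ (evtWAS W A S w false true) → 0 < μ (evtWAS W A S w true true) →
      cexp μ (fun ω => Ypot0 ω - Y₀ ω) (evtWAS W A S w true true)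
        = cexp μ (fun ω => Ypot0 ω - Y₀ ω) (evtWAS W A S w false true))
    -- the treated target is nonempty
    (hA1S0 : 0 < μ (evtAS A S true false))
    -- positivity of selection and of treatment assignment
    (hpos : ∀ w : 𝒲, 0 < μ (evtWAS W A S w true false) →
      0 < μ (evtWAS W A S w true true) ∧ 0 < μ (evtWAS W A S w false true))
    -- mean exchangeability of selection among the treated
    (hexch : ∀ w : 𝒲, 0 < μ (evtWAS W A S w true false) →
      cexp μ (fun ω => Ypot1 ω - Ypot0 ω) (evtWAS W A S w true false)
        = cexp μ (fun ω => Ypot1 ω - Ypot0 ω) (evtWAS W A S w true true)) :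
    cexp μ (fun ω => Ypot1 ω - Ypot0 ω) (evtAS A S true false)
      = ∑ w : 𝒲, (mfun μ W A S Y₀ Y₁ true w - mfun μ W A S Y₀ Y₁ false w)
          * ((μ[|evtAS A S true false]) {ω | W ω = w}).toReal := by
  set X : Ω → ℝ := fun ω => Ypot1 ω - Ypot0 ω with hX
  have hXint : Integrable X μ := hPot1.sub hPot0
  set E : Set Ω := evtAS A S true false with hE
  have hEmeas : MeasurableSet E := by
    have : E = A ⁻¹' {true} ∩ S ⁻¹' {false} := rfl
    rw [this]
    exact (hA (measurableSet_singleton _)).inter (hS (measurableSet_singleton _))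
  have hWASmeas : ∀ (w : 𝒲) (a s : Bool), MeasurableSet (evtWAS W A S w a s) := by
    intro w a s
    have : evtWAS W A S w a s = W ⁻¹' {w} ∩ (A ⁻¹' {a} ∩ S ⁻¹' {s}) := rfl
    rw [this]
    exact (hW (measurableSet_singleton _)).inter
      ((hA (measurableSet_singleton _)).inter (hS (measurableSet_singleton _)))
  have hfin : ∀ s : Set Ω, μ s ≠ ⊤ := fun s => (measure_lt_top μ s).ne
  -- the per-stratum identification
  have key : ∀ w : 𝒲, (μ (evtWAS W A S w true false)).toReal * cexp μ X (evtWAS W A S w true false)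
      = (μ (evtWAS W A S w true false)).toReal
        * (mfun μ W A S Y₀ Y₁ true w - mfun μ W A S Y₀ Y₁ false w) := by
    intro w
    by_cases hw : μ (evtWAS W A S w true false) = 0
    · rw [hw]; simp
    · have hwpos : 0 < μ (evtWAS W A S w true false) := pos_iff_ne_zero.mpr hw
      obtain ⟨h11, h01⟩ := hpos w hwpos
      congr 1
      rw [hexch w hwpos]
      have step1 : cexp μ X (evtWAS W A S w true true)
          = cexp μ (fun ω => (Y₁ ω - Y₀ ω) - (Ypot0 ω - Y₀ ω)) (evtWAS W A S w true true) := by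
        refine cexp_congr_aux μ (hWASmeas w true true) ?_
        intro ω hω
        rw [hX]
        simp only []
        rw [hcons1 ω hω.2.1]
        ring
      have step2 : cexp μ (fun ω => Ypot0 ω - Y₀ ω) (evtWAS W A S w false true)
          = cexp μ (fun ω => Y₁ ω - Y₀ ω) (evtWAS W A S w false true) := by
        refine cexp_congr_aux μ (hWASmeas w false true) ?_
        intro ω hω
        rw [hcons0 ω hω.2.1]
      have hsub := cexp_sub_aux μ (f := fun ω => Y₁ ω - Y₀ ω) (g := fun ω => Ypot0 ω - Y₀ ω)
        (hY₁.sub hY₀) (hPot0.sub hY₀) (evtWAS W A S w true true)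
      rw [step1, hsub, hPT w h01 h11, step2]
      rfl
  -- decompose the set integral over E into strata
  have hEunion : E = ⋃ w : 𝒲, evtWAS W A S w true false := by
    ext ω
    simp only [Set.mem_iUnion]
    constructor
    · intro h; exact ⟨W ω, rfl, h.1, h.2⟩
    · rintro ⟨w, -, h1, h2⟩; exact ⟨h1, h2⟩
  have hdisj : Pairwise (Function.onFun Disjoint (fun w : 𝒲 => evtWAS W A S w true false)) := by
    intro w w' hww'
    refine Set.disjoint_left.mpr ?_
    intro ω h1 h2
    exact hww' (h1.1.symm.trans h2.1)
  have hpart : ∫ ω in E, X ω ∂μ = ∑ w : 𝒲, ∫ ω in evtWAS W A S w true false, X ω ∂μ := by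
    rw [hEunion, integral_iUnion (fun w => hWASmeas w true false) hdisj
      (hXint.integrableOn), tsum_fintype]
  -- express both sides and conclude
  have lhs_eq : cexp μ X E = (μ E)⁻¹.toReal * ∑ w : 𝒲, (μ (evtWAS W A S w true false)).toReal
      * cexp μ X (evtWAS W A S w true false) := by
    unfold cexp
    rw [ProbabilityTheory.cond, integral_smul_measure, smul_eq_mul]
    congr 1
    rw [hpart]
    exact Finset.sum_congr rfl fun w _ =>
      setIntegral_eq_cexp_aux μ X (evtWAS W A S w true false) (hfin _)
  have rhs_term : ∀ w : 𝒲, ((μ[|E]) {ω | W ω = w}).toReal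
      = (μ E)⁻¹.toReal * (μ (evtWAS W A S w true false)).toReal := by
    intro w
    rw [ProbabilityTheory.cond_apply hEmeas]
    have : E ∩ {ω | W ω = w} = evtWAS W A S w true false := by
      ext ω
      simp only [Set.mem_inter_iff, Set.mem_setOf_eq, evtWAS, evtAS, hE]
      tauto
    rw [this, ENNReal.toReal_mul]
  rw [lhs_eq, Finset.mul_sum]
  refine Finset.sum_congr rfl fun w _ => ?_
  rw [rhs_term w, key w]
  ring

end
end

section
/- (Theorem 1, PATT.) Suppose μ(A=1, S=0) > 0; that consistency and parallel trends hold; that every w with μ(W=w, A=1, S=0) > 0 satisfies μ(W=w, A=1, S=1) > 0 and μ(W=w, A=0, S=1) > 0; that mean latent exchangeability of selection holds in arm a=1; and that U-homogeneity holds. Then the population average treatment effect in the treated is identified: E[Y₁(1) − Y₁(0) | A=1, S=0] = Σ_w (m₁(w) − m₀(w)) · μ({W=w} | {A=1, S=0}). -/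
open MeasureTheory ProbabilityTheory
open scoped Classical

noncomputable section

/-- The event `{W = w, U = u, A = a, S = s}`. -/
def evtWUAS {Ω 𝒲 𝒰 : Type*} (W : Ω → 𝒲) (U : Ω → 𝒰) (A S : Ω → Bool)
    (w : 𝒲) (u : 𝒰) (a s : Bool) : Set Ω :=
  {ω | W ω = w ∧ U ω = u ∧ A ω = a ∧ S ω = s}

/-!
Condition the treated target population on the strata `W = w` (law of total expectation); strata
of zero mass get zero weight. A stratum of positive mass contains a latent cell `U = u` of positive
mass, so U-homogeneity and latent exchangeability move its mean effect to the treated study stratum.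
There consistency and parallel trends identify it as the difference in differences
`m₁(w) - m₀(w)`.
-/

section ConditionalMean

variable {Ω : Type*} [MeasurableSpace Ω] {μ : Measure Ω} {E F : Set Ω} {X Y : Ω → ℝ}

theorem MeasureTheory.Integrable.cond (hX : Integrable X μ) (E : Set Ω) : Integrable X μ[|E] := by
  rcases eq_or_ne (μ E) 0 with hE | hE
  · rw [cond_eq_zero_of_meas_eq_zero hE]
    exact integrable_zero_measure
  · exact hX.restrict.smul_measure (ENNReal.inv_ne_top.mpr hE)

theorem cexp_sub (hX : Integrable X μ) (hY : Integrable Y μ) :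
    cexp μ (fun ω => X ω - Y ω) E = cexp μ X E - cexp μ Y E :=
  integral_sub (hX.cond E) (hY.cond E)

theorem cexp_congr (hE : MeasurableSet E) (h : ∀ ω ∈ E, X ω = Y ω) : cexp μ X E = cexp μ Y E :=
  integral_congr_ae <| (ae_cond_mem hE).mono h

theorem cexp_eq_sum_cexp_inter_mul_cond {ι : Type*} [Fintype ι] [MeasurableSpace ι]
    [MeasurableSingletonClass ι] [IsFiniteMeasure μ] {V : Ω → ι} (hE : MeasurableSet E)
    (hV : Measurable V) (hX : Integrable X μ) :
    cexp μ X E = ∑ i, cexp μ X (E ∩ V ⁻¹' {i}) * (μ[|E] (V ⁻¹' {i})).toReal := by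
  have hfiber : ∀ i, MeasurableSet (V ⁻¹' {i}) := fun i => hV (measurableSet_singleton i)
  calc cexp μ X E = ∫ ω, X ω ∂(∑ i, μ[|E] (V ⁻¹' {i}) • μ[|E][|V ⁻¹' {i}]) := by
        rw [sum_meas_smul_cond_fiber hV]; rfl
    _ = ∑ i, cexp μ X (E ∩ V ⁻¹' {i}) * (μ[|E] (V ⁻¹' {i})).toReal := by
        rw [integral_finsetSum_measure (μ := fun i => μ[|E] (V ⁻¹' {i}) • μ[|E][|V ⁻¹' {i}])
          fun i _ => ((hX.cond E).cond _).smul_measure (measure_ne_top _ _)]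
        refine Finset.sum_congr rfl fun i _ => ?_
        rw [integral_smul_measure, cond_cond_eq_cond_inter hE (hfiber i), smul_eq_mul, mul_comm]
        rfl

theorem cexp_eq_sum_mul_cond_of_forall {ι : Type*} [Fintype ι] [MeasurableSpace ι]
    [MeasurableSingletonClass ι] [IsFiniteMeasure μ] {V : Ω → ι} (hE : MeasurableSet E)
    (hV : Measurable V) (hX : Integrable X μ) {f : ι → ℝ}
    (hf : ∀ i, 0 < μ (E ∩ V ⁻¹' {i}) → cexp μ X (E ∩ V ⁻¹' {i}) = f i) :
    cexp μ X E = ∑ i, f i * (μ[|E] (V ⁻¹' {i})).toReal := by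
  rw [cexp_eq_sum_cexp_inter_mul_cond hE hV hX]
  refine Finset.sum_congr rfl fun i _ => ?_
  rcases eq_zero_or_pos (μ (E ∩ V ⁻¹' {i})) with hnull | hpos
  · rw [cond_apply hE, hnull, mul_zero, ENNReal.toReal_zero, mul_zero, mul_zero]
  · rw [hf i hpos]

/-- Some cell `E ∩ U ⁻¹' {u}` has positive mass; through it, homogeneity and the cellwise equality
chain the two means. -/
theorem cexp_eq_of_forall_cell_eq {ι : Type*} [Countable ι] {U : Ω → ι} (hE : 0 < μ E)
    (hpos : ∀ u, 0 < μ (E ∩ U ⁻¹' {u}) → 0 < μ (F ∩ U ⁻¹' {u}))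
    (hcell : ∀ u, 0 < μ (E ∩ U ⁻¹' {u}) → cexp μ X (E ∩ U ⁻¹' {u}) = cexp μ X (F ∩ U ⁻¹' {u}))
    (hhomE : ∀ u, 0 < μ (E ∩ U ⁻¹' {u}) → cexp μ X (E ∩ U ⁻¹' {u}) = cexp μ X E)
    (hhomF : ∀ u, 0 < μ (F ∩ U ⁻¹' {u}) → cexp μ X (F ∩ U ⁻¹' {u}) = cexp μ X F) :
    cexp μ X E = cexp μ X F := by
  have hcover : μ (⋃ u, E ∩ U ⁻¹' {u}) ≠ 0 := by
    rw [← Set.inter_iUnion, ← Set.preimage_iUnion, Set.iUnion_of_singleton, Set.preimage_univ,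
      Set.inter_univ]
    exact hE.ne'
  obtain ⟨u, hu⟩ := exists_measure_pos_of_not_measure_iUnion_null hcover
  rw [← hhomE u hu, hcell u hu, hhomF u (hpos u hu)]

/-- Adding and subtracting `Y₀` splits the effect into the observed change of the treated and a
counterfactual change, which parallel trends moves to the controls `E₀`. -/
theorem cexp_effect_eq_diff_in_diff {E₁ E₀ : Set Ω} {Y₀ Y₁ Ypot0 Ypot1 : Ω → ℝ}
    (hE₁ : MeasurableSet E₁) (hE₀ : MeasurableSet E₀) (hY₀ : Integrable Y₀ μ)
    (hPot0 : Integrable Ypot0 μ) (hPot1 : Integrable Ypot1 μ)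
    (hcons1 : ∀ ω ∈ E₁, Ypot1 ω = Y₁ ω) (hcons0 : ∀ ω ∈ E₀, Ypot0 ω = Y₁ ω)
    (hPT : cexp μ (fun ω => Ypot0 ω - Y₀ ω) E₁ = cexp μ (fun ω => Ypot0 ω - Y₀ ω) E₀) :
    cexp μ (fun ω => Ypot1 ω - Ypot0 ω) E₁
      = cexp μ (fun ω => Y₁ ω - Y₀ ω) E₁ - cexp μ (fun ω => Y₁ ω - Y₀ ω) E₀ := by
  calc cexp μ (fun ω => Ypot1 ω - Ypot0 ω) E₁
      = cexp μ (fun ω => (Ypot1 ω - Y₀ ω) - (Ypot0 ω - Y₀ ω)) E₁ := by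
        simp only [sub_sub_sub_cancel_right]
    _ = cexp μ (fun ω => Ypot1 ω - Y₀ ω) E₁ - cexp μ (fun ω => Ypot0 ω - Y₀ ω) E₀ := by
        rw [cexp_sub (X := fun ω => Ypot1 ω - Y₀ ω) (Y := fun ω => Ypot0 ω - Y₀ ω)
          (hPot1.sub hY₀) (hPot0.sub hY₀), hPT]
    _ = cexp μ (fun ω => Y₁ ω - Y₀ ω) E₁ - cexp μ (fun ω => Y₁ ω - Y₀ ω) E₀ := by
        rw [cexp_congr hE₁ fun ω hω => by rw [hcons1 ω hω],
          cexp_congr hE₀ fun ω hω => by rw [hcons0 ω hω]]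

end ConditionalMean

section Events

variable {Ω 𝒲 𝒰 : Type*} {W : Ω → 𝒲} {U : Ω → 𝒰} {A S : Ω → Bool}

theorem evtWUAS_eq_evtWAS_inter (w : 𝒲) (u : 𝒰) (a s : Bool) :
    evtWUAS W U A S w u a s = evtWAS W A S w a s ∩ U ⁻¹' {u} := by
  ext ω
  simp only [evtWUAS, evtWAS, Set.mem_ofPred_eq, Set.mem_inter_iff, Set.mem_preimage,
    Set.mem_singleton_iff]
  tauto

theorem evtAS_inter_preimage_eq_evtWAS (w : 𝒲) (a s : Bool) :
    evtAS A S a s ∩ W ⁻¹' {w} = evtWAS W A S w a s := by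
  ext ω
  simp only [evtAS, evtWAS, Set.mem_ofPred_eq, Set.mem_inter_iff, Set.mem_preimage,
    Set.mem_singleton_iff]
  tauto

variable [MeasurableSpace Ω] [MeasurableSpace 𝒲] [MeasurableSingletonClass 𝒲]

theorem measurableSet_evtAS (hA : Measurable A) (hS : Measurable S) (a s : Bool) :
    MeasurableSet (evtAS A S a s) :=
  (hA (measurableSet_singleton a)).inter (hS (measurableSet_singleton s))

theorem measurableSet_evtWAS (hW : Measurable W) (hA : Measurable A) (hS : Measurable S)
    (w : 𝒲) (a s : Bool) : MeasurableSet (evtWAS W A S w a s) :=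
  (hW (measurableSet_singleton w)).inter (measurableSet_evtAS hA hS a s)

end Events

theorem transport_identifies_PATT_general
    {Ω : Type*} [MeasurableSpace Ω] (μ : Measure Ω) [IsProbabilityMeasure μ]
    {𝒲 : Type*} [Fintype 𝒲] [MeasurableSpace 𝒲] [MeasurableSingletonClass 𝒲]
    {𝒰 : Type*} [Fintype 𝒰]
    (S A : Ω → Bool) (W : Ω → 𝒲) (U : Ω → 𝒰) (Y₀ Y₁ Ypot0 Ypot1 : Ω → ℝ)
    (hS : Measurable S) (hA : Measurable A) (hW : Measurable W)
    (hY₀ : Integrable Y₀ μ)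
    (hPot0 : Integrable Ypot0 μ) (hPot1 : Integrable Ypot1 μ)
    -- consistency
    (hcons0 : ∀ ω, A ω = false → Ypot0 ω = Y₁ ω)
    (hcons1 : ∀ ω, A ω = true → Ypot1 ω = Y₁ ω)
    -- parallel trends
    (hPT : ∀ w : 𝒲, 0 < μ (evtWAS W A S w false true) → 0 < μ (evtWAS W A S w true true) →
      cexp μ (fun ω => Ypot0 ω - Y₀ ω) (evtWAS W A S w true true)
        = cexp μ (fun ω => Ypot0 ω - Y₀ ω) (evtWAS W A S w false true))
    -- positivity
    (hpos : ∀ w : 𝒲, 0 < μ (evtWAS W A S w true false) →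
      0 < μ (evtWAS W A S w true true) ∧ 0 < μ (evtWAS W A S w false true))
    -- latent positivity of selection (arm a = 1)
    (hposSel : ∀ (w : 𝒲) (u : 𝒰), 0 < μ (evtWUAS W U A S w u true false) →
      0 < μ (evtWUAS W U A S w u true true))
    -- mean latent exchangeability of selection (arm a = 1)
    (hexchSel : ∀ (w : 𝒲) (u : 𝒰), 0 < μ (evtWUAS W U A S w u true false) →
      cexp μ (fun ω => Ypot1 ω - Ypot0 ω) (evtWUAS W U A S w u true false)
        = cexp μ (fun ω => Ypot1 ω - Ypot0 ω) (evtWUAS W U A S w u true true))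
    -- U-homogeneity
    (hUhom : ∀ (w : 𝒲) (u : 𝒰) (a s : Bool), 0 < μ (evtWUAS W U A S w u a s) →
      cexp μ (fun ω => Ypot1 ω - Ypot0 ω) (evtWUAS W U A S w u a s)
        = cexp μ (fun ω => Ypot1 ω - Ypot0 ω) (evtWAS W A S w a s)) :
    cexp μ (fun ω => Ypot1 ω - Ypot0 ω) (evtAS A S true false)
      = ∑ w : 𝒲, (mfun μ W A S Y₀ Y₁ true w - mfun μ W A S Y₀ Y₁ false w)
          * ((μ[|evtAS A S true false]) {ω | W ω = w}).toReal := by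
  set τ : Ω → ℝ := fun ω => Ypot1 ω - Ypot0 ω
  simp only [evtWUAS_eq_evtWAS_inter] at hposSel hexchSel hUhom
  have hstratum : ∀ w, 0 < μ (evtWAS W A S w true false) →
      cexp μ τ (evtWAS W A S w true false)
        = mfun μ W A S Y₀ Y₁ true w - mfun μ W A S Y₀ Y₁ false w := by
    intro w hw
    obtain ⟨h11, h01⟩ := hpos w hw
    rw [cexp_eq_of_forall_cell_eq hw (hposSel w) (hexchSel w) (hUhom w · true false)
      (hUhom w · true true)]
    exact cexp_effect_eq_diff_in_diff (measurableSet_evtWAS hW hA hS w true true)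
      (measurableSet_evtWAS hW hA hS w false true) hY₀ hPot0 hPot1
      (fun ω hω => hcons1 ω hω.2.1) (fun ω hω => hcons0 ω hω.2.1) (hPT w h01 h11)
  refine cexp_eq_sum_mul_cond_of_forall (measurableSet_evtAS hA hS true false) hW
    (hPot1.sub hPot0) fun w hw => ?_
  rw [evtAS_inter_preimage_eq_evtWAS] at hw ⊢
  exact hstratum w hw

/-- Theorem 1, PATT: under consistency, parallel trends, positivity, mean
latent exchangeability of selection in arm a = 1, latent positivity of selection, and
U-homogeneity, the PATT is identified. -/
theorem transport_identifies_PATT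
    {Ω : Type*} [MeasurableSpace Ω] (μ : Measure Ω) [IsProbabilityMeasure μ]
    {𝒲 : Type*} [Fintype 𝒲] [MeasurableSpace 𝒲] [MeasurableSingletonClass 𝒲]
    {𝒰 : Type*} [Fintype 𝒰] [MeasurableSpace 𝒰] [MeasurableSingletonClass 𝒰]
    (S A : Ω → Bool) (W : Ω → 𝒲) (U : Ω → 𝒰) (Y₀ Y₁ Ypot0 Ypot1 : Ω → ℝ)
    (hS : Measurable S) (hA : Measurable A) (hW : Measurable W) (hU : Measurable U)
    (hY₀ : Integrable Y₀ μ) (hY₁ : Integrable Y₁ μ)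
    (hPot0 : Integrable Ypot0 μ) (hPot1 : Integrable Ypot1 μ)
    -- consistency
    (hcons0 : ∀ ω, A ω = false → Ypot0 ω = Y₁ ω)
    (hcons1 : ∀ ω, A ω = true → Ypot1 ω = Y₁ ω)
    -- parallel trends
    (hPT : ∀ w : 𝒲, 0 < μ (evtWAS W A S w false true) → 0 < μ (evtWAS W A S w true true) →
      cexp μ (fun ω => Ypot0 ω - Y₀ ω) (evtWAS W A S w true true)
        = cexp μ (fun ω => Ypot0 ω - Y₀ ω) (evtWAS W A S w false true))
    -- the treated target is nonempty
    (hA1S0 : 0 < μ (evtAS A S true false))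
    -- positivity
    (hpos : ∀ w : 𝒲, 0 < μ (evtWAS W A S w true false) →
      0 < μ (evtWAS W A S w true true) ∧ 0 < μ (evtWAS W A S w false true))
    -- latent positivity of selection (arm a = 1)
    (hposSel : ∀ (w : 𝒲) (u : 𝒰), 0 < μ (evtWUAS W U A S w u true false) →
      0 < μ (evtWUAS W U A S w u true true))
    -- mean latent exchangeability of selection (arm a = 1)
    (hexchSel : ∀ (w : 𝒲) (u : 𝒰), 0 < μ (evtWUAS W U A S w u true false) →
      cexp μ (fun ω => Ypot1 ω - Ypot0 ω) (evtWUAS W U A S w u true false)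
        = cexp μ (fun ω => Ypot1 ω - Ypot0 ω) (evtWUAS W U A S w u true true))
    -- U-homogeneity
    (hUhom : ∀ (w : 𝒲) (u : 𝒰) (a s : Bool), 0 < μ (evtWUAS W U A S w u a s) →
      cexp μ (fun ω => Ypot1 ω - Ypot0 ω) (evtWUAS W U A S w u a s)
        = cexp μ (fun ω => Ypot1 ω - Ypot0 ω) (evtWAS W A S w a s)) :
    cexp μ (fun ω => Ypot1 ω - Ypot0 ω) (evtAS A S true false)
      = ∑ w : 𝒲, (mfun μ W A S Y₀ Y₁ true w - mfun μ W A S Y₀ Y₁ false w)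
          * ((μ[|evtAS A S true false]) {ω | W ω = w}).toReal :=
  transport_identifies_PATT_general μ S A W U Y₀ Y₁ Ypot0 Ypot1 hS hA hW hY₀ hPot0 hPot1 hcons0
    hcons1 hPT hpos hposSel hexchSel hUhom
end
end

section
/- (Population validity of inverse-odds weighting.) Fix a* ∈ {0,1} and suppose c := μ(A=a*, S=0) > 0 and that every w with μ(W=w) > 0 satisfies μ(W=w, A=1, S=1) > 0 and μ(W=w, A=0, S=1) > 0. Then, with the true propensities, E_μ[ ( 1{A=1,S=1}·g₍a*,0₎(W)/(c·g₍1,1₎(W)) − 1{A=0,S=1}·g₍a*,0₎(W)/(c·g₍0,1₎(W)) )·ΔY ] = ψ(a*). -/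
/-!
Everything splits over the finitely many cells `{W = w, A = a, S = s}`. On the cell `(w, a, 1)`
the weight is the constant `g_{a*,0}(w) / (c g_{a,1}(w))`, and the propensity ratio equals
`μ(W = w, A = a*, S = 0) / μ(W = w, A = a, S = 1)`; so the cell contributes
`μ(W = w, A = a*, S = 0) m_a(w) / c`. Summing over `w` is the same as integrating
`m₁(W) - m₀(W)` against `μ(· | A = a*, S = 0)`. A null cell contributes zero on both sides,
because conditioning on a null event gives the zero measure.
-/

open MeasureTheory ProbabilityTheory
open scoped Classical

noncomputable section

/-- The true propensity `g_{a,s}(w) = μ({A = a, S = s} | {W = w})`. -/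
def gprop {Ω 𝒲 : Type*} [MeasurableSpace Ω] (μ : Measure Ω) (W : Ω → 𝒲) (A S : Ω → Bool)
    (a s : Bool) (w : 𝒲) : ℝ :=
  ((μ[|{ω | W ω = w}]) {ω | A ω = a ∧ S ω = s}).toReal

/-- The target statistical parameter `ψ(a*) = E[m₁(W) − m₀(W) | A = a*, S = 0]`. -/
def psiParam {Ω 𝒲 : Type*} [MeasurableSpace Ω] (μ : Measure Ω) (W : Ω → 𝒲) (A S : Ω → Bool)
    (Y₀ Y₁ : Ω → ℝ) (astar : Bool) : ℝ :=
  cexp μ (fun ω => mfun μ W A S Y₀ Y₁ true (W ω) - mfun μ W A S Y₀ Y₁ false (W ω))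
    (evtAS A S astar false)

section FiniteValued

variable {Ω ι : Type*} [MeasurableSpace Ω] [Fintype ι] [MeasurableSpace ι]
  [MeasurableSingletonClass ι] {ν : Measure Ω} {V : Ω → ι}

theorem integral_eq_sum_setIntegral_fiber (hV : Measurable V) {f : Ω → ℝ}
    (hf : Integrable f ν) : ∫ ω, f ω ∂ν = ∑ i, ∫ ω in V ⁻¹' {i}, f ω ∂ν := by
  have hcover : ⋃ i, V ⁻¹' {i} = Set.univ := by ext; simp
  rw [← setIntegral_univ, ← hcover]
  exact integral_iUnion_fintype (fun i => hV (measurableSet_singleton i))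
    (pairwise_disjoint_fiber V) (fun _ => hf.integrableOn)

theorem integral_comp_mul_eq_sum (hV : Measurable V) (h : ι → ℝ) {X : Ω → ℝ}
    (hX : Integrable X ν) :
    ∫ ω, h (V ω) * X ω ∂ν = ∑ i, h i * ∫ ω in V ⁻¹' {i}, X ω ∂ν := by
  obtain ⟨C, hC⟩ := Finite.exists_le fun i => ‖h i‖
  have hint : Integrable (fun ω => h (V ω) * X ω) ν :=
    hX.bdd_mul (Measurable.of_discrete.comp hV).aestronglyMeasurable
      (Filter.Eventually.of_forall fun ω => hC (V ω))
  rw [integral_eq_sum_setIntegral_fiber hV hint]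
  refine Finset.sum_congr rfl fun i _ => ?_
  rw [← integral_const_mul]
  refine setIntegral_congr_fun (hV (measurableSet_singleton i)) fun ω hω => ?_
  rw [Set.mem_preimage, Set.mem_singleton_iff] at hω
  rw [hω]

theorem integral_comp_eq_sum [IsFiniteMeasure ν] (hV : Measurable V) (h : ι → ℝ) :
    ∫ ω, h (V ω) ∂ν = ∑ i, ν.real (V ⁻¹' {i}) * h i := by
  simpa [mul_comm] using integral_comp_mul_eq_sum hV h (integrable_const (1 : ℝ))

end FiniteValued

section Conditioning

variable {Ω 𝒲 : Type*} [MeasurableSpace Ω] {μ : Measure Ω}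

theorem cexp_eq_inv_mul_setIntegral (X : Ω → ℝ) (E : Set Ω) :
    cexp μ X E = (μ.real E)⁻¹ * ∫ ω in E, X ω ∂μ := by
  rw [cexp, ProbabilityTheory.cond, integral_smul_measure, ENNReal.toReal_inv, smul_eq_mul,
    measureReal_def]

theorem gprop_eq_div [MeasurableSpace 𝒲] [MeasurableSingletonClass 𝒲] {W : Ω → 𝒲}
    (hW : Measurable W) (A S : Ω → Bool) (a s : Bool) (w : 𝒲) :
    gprop μ W A S a s w = μ.real (evtWAS W A S w a s) / μ.real {ω | W ω = w} := by
  rw [gprop, cond_apply (s := {ω | W ω = w}) (hW (measurableSet_singleton w)),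
    ENNReal.toReal_mul, ENNReal.toReal_inv, inv_mul_eq_div]
  rfl

theorem gprop_div_gprop_mul_setIntegral [IsFiniteMeasure μ] [MeasurableSpace 𝒲]
    [MeasurableSingletonClass 𝒲] {W : Ω → 𝒲} (hW : Measurable W) (A S : Ω → Bool)
    (X : Ω → ℝ) (w : 𝒲) (a s a' s' : Bool) :
    gprop μ W A S a' s' w / gprop μ W A S a s w * ∫ ω in evtWAS W A S w a s, X ω ∂μ
      = μ.real (evtWAS W A S w a' s') * cexp μ X (evtWAS W A S w a s) := by
  by_cases hE : μ (evtWAS W A S w a s) = 0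
  · rw [Measure.restrict_eq_zero.mpr hE, cexp, cond_eq_zero_of_meas_eq_zero hE]
    simp
  have hE' : 0 < μ.real (evtWAS W A S w a s) := ENNReal.toReal_pos hE (measure_ne_top _ _)
  have hW' : 0 < μ.real {ω | W ω = w} :=
    hE'.trans_le (measureReal_mono fun ω hω => hω.1)
  rw [gprop_eq_div hW, gprop_eq_div hW, cexp_eq_inv_mul_setIntegral]
  field_simp

end Conditioning

theorem iow_functional_valid_general
    {Ω : Type*} [MeasurableSpace Ω] (μ : Measure Ω) [IsProbabilityMeasure μ]
    {𝒲 : Type*} [Fintype 𝒲] [MeasurableSpace 𝒲] [MeasurableSingletonClass 𝒲]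
    (S A : Ω → Bool) (W : Ω → 𝒲) (Y₀ Y₁ : Ω → ℝ)
    (hS : Measurable S) (hA : Measurable A) (hW : Measurable W)
    (hY₀ : Integrable Y₀ μ) (hY₁ : Integrable Y₁ μ)
    (astar : Bool) :
    ∫ ω,
      ((if A ω = true ∧ S ω = true then
          gprop μ W A S astar false (W ω)
            / ((μ (evtAS A S astar false)).toReal * gprop μ W A S true true (W ω))
        else 0)
      - (if A ω = false ∧ S ω = true then
          gprop μ W A S astar false (W ω)
            / ((μ (evtAS A S astar false)).toReal * gprop μ W A S false true (W ω))
        else 0)) * (Y₁ ω - Y₀ ω) ∂μ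
    = psiParam μ W A S Y₀ Y₁ astar := by
  set c := (μ (evtAS A S astar false)).toReal
  have hfiber (w : 𝒲) (a s : Bool) :
      (fun ω => (W ω, A ω, S ω)) ⁻¹' {(w, a, s)} = evtWAS W A S w a s := by
    ext; simp [evtWAS]
  have hB : MeasurableSet (evtAS A S astar false) :=
    (hA (measurableSet_singleton astar)).inter (hS (measurableSet_singleton false))
  have htarget (w : 𝒲) : (μ[|evtAS A S astar false]).real (W ⁻¹' {w})
      = c⁻¹ * μ.real (evtWAS W A S w astar false) := by
    rw [measureReal_def, cond_apply hB, ENNReal.toReal_mul, ENNReal.toReal_inv, Set.inter_comm]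
    rfl
  refine (integral_comp_mul_eq_sum (hW.prodMk (hA.prodMk hS))
    (fun v => (if v.2.1 = true ∧ v.2.2 = true then
          gprop μ W A S astar false v.1 / (c * gprop μ W A S true true v.1) else 0)
      - (if v.2.1 = false ∧ v.2.2 = true then
          gprop μ W A S astar false v.1 / (c * gprop μ W A S false true v.1) else 0))
    (hY₁.sub hY₀ : Integrable (fun ω => Y₁ ω - Y₀ ω) μ)).trans ?_
  rw [psiParam, cexp,
    integral_comp_eq_sum hW fun w => mfun μ W A S Y₀ Y₁ true w - mfun μ W A S Y₀ Y₁ false w]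
  simp only [Fintype.sum_prod_type, Fintype.sum_bool, hfiber, Bool.true_eq_false,
    Bool.false_eq_true, and_true, and_false, if_true, if_false, sub_zero,
    zero_sub, zero_mul, add_zero]
  refine Finset.sum_congr rfl fun w _ => ?_
  rw [htarget]
  have h₁ := gprop_div_gprop_mul_setIntegral (μ := μ) hW A S
    (fun ω => Y₁ ω - Y₀ ω) w true true astar false
  have h₀ := gprop_div_gprop_mul_setIntegral (μ := μ) hW A S
    (fun ω => Y₁ ω - Y₀ ω) w false true astar false
  rw [mfun, mfun]
  linear_combination c⁻¹ * h₁ - c⁻¹ * h₀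

/-- population validity of the inverse-odds weighting functional with the
true propensities. -/
theorem iow_functional_valid
    {Ω : Type*} [MeasurableSpace Ω] (μ : Measure Ω) [IsProbabilityMeasure μ]
    {𝒲 : Type*} [Fintype 𝒲] [MeasurableSpace 𝒲] [MeasurableSingletonClass 𝒲]
    (S A : Ω → Bool) (W : Ω → 𝒲) (Y₀ Y₁ : Ω → ℝ)
    (hS : Measurable S) (hA : Measurable A) (hW : Measurable W)
    (hY₀ : Integrable Y₀ μ) (hY₁ : Integrable Y₁ μ)
    (astar : Bool)
    (hc : 0 < μ (evtAS A S astar false))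
    (hpos : ∀ w : 𝒲, 0 < μ {ω | W ω = w} →
      0 < μ (evtWAS W A S w true true) ∧ 0 < μ (evtWAS W A S w false true)) :
    ∫ ω,
      ((if A ω = true ∧ S ω = true then
          gprop μ W A S astar false (W ω)
            / ((μ (evtAS A S astar false)).toReal * gprop μ W A S true true (W ω))
        else 0)
      - (if A ω = false ∧ S ω = true then
          gprop μ W A S astar false (W ω)
            / ((μ (evtAS A S astar false)).toReal * gprop μ W A S false true (W ω))
        else 0)) * (Y₁ ω - Y₀ ω) ∂μ
    = psiParam μ W A S Y₀ Y₁ astar :=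
  iow_functional_valid_general μ S A W Y₀ Y₁ hS hA hW hY₀ hY₁ astar
end
end

section
/- (Cancellation of augmentation terms under true propensities.) Fix a* ∈ {0,1} and suppose c := μ(A=a*, S=0) > 0 and that every w with μ(W=w) > 0 satisfies μ(W=w, A=1, S=1) > 0 and μ(W=w, A=0, S=1) > 0. Then for each a ∈ {0,1} and every function m* : 𝒲 → ℝ, E_μ[ ( 1{A=a,S=1}·g₍a*,0₎(W)/(c·g₍a,1₎(W)) − 1{A=a*,S=0}/c )·m*(W) ] = 0. -/
open MeasureTheory ProbabilityTheory
open scoped Classical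

noncomputable section

/-! Pushing `μ` forward along `(W, A, S)` turns the integral into a finite sum over `w` of
`m*(w)` times `μ(w, a, 1) · g_{a*,0}(w) / (c · g_{a,1}(w)) − μ(w, a*, 0) / c`. Since
`g_{a,s}(w) = μ(w, a, s) / μ(W = w)`, the first term is `μ(w, a*, 0) / c` as soon as
`μ(w, a, 1) > 0`, which positivity guarantees whenever `μ(W = w) > 0`; otherwise both
terms are null. -/

section

variable {Ω : Type*} [MeasurableSpace Ω] (μ : Measure Ω)

theorem integral_comp_eq_sum_measureReal_preimage {α : Type*} [Fintype α] [MeasurableSpace α]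
    [MeasurableSingletonClass α] [IsFiniteMeasure μ] {T : Ω → α} (hT : Measurable T)
    (φ : α → ℝ) : ∫ ω, φ (T ω) ∂μ = ∑ x, μ.real (T ⁻¹' {x}) * φ x := by
  rw [← integral_map hT.aemeasurable (measurable_of_countable φ).aestronglyMeasurable,
    integral_fintype .of_finite]
  simp only [smul_eq_mul, map_measureReal_apply hT (measurableSet_singleton _)]

variable {𝒲 : Type*} [MeasurableSpace 𝒲] [MeasurableSingletonClass 𝒲] {W : Ω → 𝒲}
  {A S : Ω → Bool}

theorem gprop_eq_measureReal_div (hW : Measurable W) (a s : Bool) (w : 𝒲) :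
    gprop μ W A S a s w = μ.real (evtWAS W A S w a s) / μ.real {ω | W ω = w} := by
  have hw : MeasurableSet {ω | W ω = w} := hW (measurableSet_singleton w)
  rw [gprop, cond_apply hw, ENNReal.toReal_mul, ENNReal.toReal_inv, div_eq_inv_mul]
  rfl

theorem measureReal_evtWAS_mul_gprop_div [IsFiniteMeasure μ] (hW : Measurable W) {w : 𝒲}
    {a : Bool} (ha : 0 < μ {ω | W ω = w} → 0 < μ (evtWAS W A S w a true)) (b : Bool) (c : ℝ) :
    μ.real (evtWAS W A S w a true) * (gprop μ W A S b false w / (c * gprop μ W A S a true w))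
      = μ.real (evtWAS W A S w b false) / c := by
  rcases (zero_le : 0 ≤ μ {ω | W ω = w}).eq_or_lt with hw | hw
  · have hnull : ∀ a' s', μ.real (evtWAS W A S w a' s') = 0 := fun a' s' => by
      rw [measureReal_eq_zero_iff]
      exact measure_mono_null (fun ω hω => hω.1) hw.symm
    simp [hnull]
  · have hp : μ.real {ω | W ω = w} ≠ 0 := (measureReal_ne_zero_iff).mpr hw.ne'
    have hq : μ.real (evtWAS W A S w a true) ≠ 0 := (measureReal_ne_zero_iff).mpr (ha hw).ne'
    rw [gprop_eq_measureReal_div μ hW, gprop_eq_measureReal_div μ hW]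
    field_simp

end

theorem augmentation_terms_cancel_general
    {Ω : Type*} [MeasurableSpace Ω] (μ : Measure Ω) [IsProbabilityMeasure μ]
    {𝒲 : Type*} [Fintype 𝒲] [MeasurableSpace 𝒲] [MeasurableSingletonClass 𝒲]
    (S A : Ω → Bool) (W : Ω → 𝒲)
    (hS : Measurable S) (hA : Measurable A) (hW : Measurable W)
    (astar : Bool)
    (hpos : ∀ w : 𝒲, 0 < μ {ω | W ω = w} →
      0 < μ (evtWAS W A S w true true) ∧ 0 < μ (evtWAS W A S w false true)) :
    ∀ (a : Bool) (mstar : 𝒲 → ℝ),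
    ∫ ω,
      ((if A ω = a ∧ S ω = true then
          gprop μ W A S astar false (W ω)
            / ((μ (evtAS A S astar false)).toReal * gprop μ W A S a true (W ω))
        else 0)
      - (if A ω = astar ∧ S ω = false then
          1 / (μ (evtAS A S astar false)).toReal
        else 0)) * mstar (W ω) ∂μ
    = 0 := by
  intro a mstar
  set c := (μ (evtAS A S astar false)).toReal
  set G := fun w => gprop μ W A S astar false w / (c * gprop μ W A S a true w)
  let φ : 𝒲 × Bool × Bool → ℝ := fun x =>
    ((if x.2 = (a, true) then G x.1 else 0) - (if x.2 = (astar, false) then 1 / c else 0))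
      * mstar x.1
  have hpre : ∀ w a' s', (fun ω => (W ω, A ω, S ω)) ⁻¹' {(w, a', s')} = evtWAS W A S w a' s' :=
    fun w a' s' => by ext ω; simp [evtWAS]
  calc _ = ∫ ω, φ (W ω, A ω, S ω) ∂μ := by simp [φ, G]
    _ = ∑ w, (μ.real (evtWAS W A S w a true) * G w
          - μ.real (evtWAS W A S w astar false) / c) * mstar w := by
      rw [integral_comp_eq_sum_measureReal_preimage μ (hW.prodMk (hA.prodMk hS)),
        Fintype.sum_prod_type]
      refine Finset.sum_congr rfl fun w _ => ?_
      simp only [φ, hpre, sub_mul, mul_sub, ite_mul, zero_mul, mul_ite, mul_zero,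
        Finset.sum_sub_distrib, Finset.sum_ite_eq', Finset.mem_univ, if_true]
      ring
    _ = 0 := by
      refine Finset.sum_eq_zero fun w _ => ?_
      have ha : 0 < μ {ω | W ω = w} → 0 < μ (evtWAS W A S w a true) := fun h => by
        cases a
        exacts [(hpos w h).2, (hpos w h).1]
      rw [measureReal_evtWAS_mul_gprop_div μ hW ha, sub_self, zero_mul]

/-- cancellation of the augmentation terms under the true propensities. -/
theorem augmentation_terms_cancel
    {Ω : Type*} [MeasurableSpace Ω] (μ : Measure Ω) [IsProbabilityMeasure μ]
    {𝒲 : Type*} [Fintype 𝒲] [MeasurableSpace 𝒲] [MeasurableSingletonClass 𝒲]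
    (S A : Ω → Bool) (W : Ω → 𝒲) (Y₀ Y₁ : Ω → ℝ)
    (hS : Measurable S) (hA : Measurable A) (hW : Measurable W)
    (hY₀ : Integrable Y₀ μ) (hY₁ : Integrable Y₁ μ)
    (astar : Bool)
    (hc : 0 < μ (evtAS A S astar false))
    (hpos : ∀ w : 𝒲, 0 < μ {ω | W ω = w} →
      0 < μ (evtWAS W A S w true true) ∧ 0 < μ (evtWAS W A S w false true)) :
    ∀ (a : Bool) (mstar : 𝒲 → ℝ),
    ∫ ω,
      ((if A ω = a ∧ S ω = true then
          gprop μ W A S astar false (W ω)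
            / ((μ (evtAS A S astar false)).toReal * gprop μ W A S a true (W ω))
        else 0)
      - (if A ω = astar ∧ S ω = false then
          1 / (μ (evtAS A S astar false)).toReal
        else 0)) * mstar (W ω) ∂μ
    = 0 :=
  augmentation_terms_cancel_general μ S A W hS hA hW astar hpos

end
end
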